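/- Let I = (x_1,x_2)^2 ∩ (x_2,x_3)^2 ∩ (x_3,x_4,x_5)^2 ∩ (x_5,x_6)^2 in K[x_1,...,x_6]. Then I does not satisfy the non-pure dual exchange property: for u = x_1x_2x_3x_5^2 and v = x_2^2x_4^2x_6^2 in G(I), deg(u) < deg(v) and deg_{x_1}(v) < deg_{x_1}(u), but x_1 x_2^2 x_4^2 x_6^2 / x_i ∉ I for every i ∈ {2, 4, 6}. -/

import Mathlib

/-! A monomial `x^m` lies in `(x_j : j ∈ J)^k` exactly when `∑_{j ∈ J} m_j ≥ k`: one direction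
peels off one variable of `J` at a time, the other specializes `x_j ↦ t` for `j ∈ J` and
`x_j ↦ 1` otherwise, sending the ideal into `(t^k)`. So membership of a monomial in `I` is a
system of four linear inequalities on its exponents, and every claim becomes arithmetic on
exponent vectors; minimality of a generator only needs to be tested on its divisors
`m / x_i`. -/

open MvPolynomial

/-- Total degree of an exponent vector. -/
def expDeg {n : ℕ} (m : Fin n →₀ ℕ) : ℕ := m.sum fun _ e => e

/-- A monomial ideal: an ideal generated by a set of monomials. -/
def IsMonomialIdeal {n : ℕ} {K : Type*} [Field K]
    (I : Ideal (MvPolynomial (Fin n) K)) : Prop :=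
  ∃ A : Set (Fin n →₀ ℕ), I = Ideal.span ((fun m => (monomial m (1 : K))) '' A)

/-- `m` is (the exponent vector of) a minimal monomial generator of `I`. -/
def MinGen {n : ℕ} {K : Type*} [Field K]
    (I : Ideal (MvPolynomial (Fin n) K)) (m : Fin n →₀ ℕ) : Prop :=
  (monomial m (1 : K)) ∈ I ∧
    ∀ m' : Fin n →₀ ℕ, m' ≤ m → m' ≠ m → (monomial m' (1 : K)) ∉ I

/-- The non-pure dual exchange property. -/
def NPDE {n : ℕ} {K : Type*} [Field K]
    (I : Ideal (MvPolynomial (Fin n) K)) : Prop :=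
  ∀ u v : Fin n →₀ ℕ, MinGen I u → MinGen I v → expDeg u ≤ expDeg v →
    ∀ i : Fin n, v i < u i →
      ∃ j : Fin n, u j < v j ∧
        (monomial (v + Finsupp.single i 1 - Finsupp.single j 1) (1 : K)) ∈ I

/-- `I` has linear quotients. -/
def HasLinearQuotients {n : ℕ} {K : Type*} [Field K]
    (I : Ideal (MvPolynomial (Fin n) K)) : Prop :=
  ∃ l : List (Fin n →₀ ℕ), l.Nodup ∧ (∀ m, MinGen I m ↔ m ∈ l) ∧
    ∀ k : Fin l.length, 0 < (k : ℕ) →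
      ∃ V : Set (Fin n),
        Submodule.colon
          (Ideal.span ((fun m => (monomial m (1 : K))) '' {m | m ∈ l.take k}))
          (Ideal.span {monomial (l.get k) (1 : K)})
        = Ideal.span ((fun i => (X i : MvPolynomial (Fin n) K)) '' V)

/-- The monomial prime ideal generated by the variables with index in `J`. -/
noncomputable def mIdeal {n : ℕ} (K : Type*) [Field K] (J : Set (Fin n)) :
    Ideal (MvPolynomial (Fin n) K) :=
  Ideal.span ((fun i => (X i : MvPolynomial (Fin n) K)) '' J)

/-- `I` is weakly polymatroidal with respect to the variable order
`x_{σ 0} > x_{σ 1} > ⋯`. -/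
def WeaklyPolymatroidal {n : ℕ} {K : Type*} [Field K]
    (I : Ideal (MvPolynomial (Fin n) K)) (σ : Equiv.Perm (Fin n)) : Prop :=
  ∀ u v : Fin n →₀ ℕ, MinGen I u → MinGen I v →
    ∀ t : Fin n, (∀ k : Fin n, k < t → u (σ k) = v (σ k)) → v (σ t) < u (σ t) →
      ∃ j : Fin n, t < j ∧ 0 < v (σ j) ∧
        (monomial (v + Finsupp.single (σ t) 1 - Finsupp.single (σ j) 1) (1 : K)) ∈ I

/-- `I` has a `d`-linear (finite free graded) resolution. -/
def HasLinearResolution {n : ℕ} {K : Type*} [Field K]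
    (I : Ideal (MvPolynomial (Fin n) K)) (d : ℕ) : Prop :=
  ∃ (b : ℕ → ℕ) (g : Fin (b 0) → MvPolynomial (Fin n) K)
    (M : ∀ k : ℕ, Matrix (Fin (b k)) (Fin (b (k + 1))) (MvPolynomial (Fin n) K)),
    (∀ i, (g i).IsHomogeneous d) ∧
    Ideal.span (Set.range g) = I ∧
    (∀ k i j, ((M k) i j).IsHomogeneous 1) ∧
    LinearMap.ker (Fintype.linearCombination (MvPolynomial (Fin n) K) g)
      = LinearMap.range (M 0).mulVecLin ∧
    ∀ k, LinearMap.ker (M k).mulVecLin = LinearMap.range (M (k + 1)).mulVecLin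

/-- The ideal generated by the degree-`d` homogeneous elements of `I`. -/
noncomputable def componentIdeal {n : ℕ} {K : Type*} [Field K]
    (I : Ideal (MvPolynomial (Fin n) K)) (d : ℕ) :
    Ideal (MvPolynomial (Fin n) K) :=
  Ideal.span {f | f ∈ I ∧ f.IsHomogeneous d}

/-- `I` is componentwise linear. -/
def ComponentwiseLinear {n : ℕ} {K : Type*} [Field K]
    (I : Ideal (MvPolynomial (Fin n) K)) : Prop :=
  ∀ d : ℕ, HasLinearResolution (componentIdeal I d) d

section
variable {K : Type*} [Field K] {n : ℕ}

theorem monomial_mem_of_le {I : Ideal (MvPolynomial (Fin n) K)} {m m' : Fin n →₀ ℕ}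
    (hle : m' ≤ m) (h : monomial m' (1 : K) ∈ I) : monomial m (1 : K) ∈ I :=
  I.mem_of_dvd (monomial_dvd_monomial.mpr ⟨Or.inr hle, one_dvd _⟩) h

theorem minGen_of_forall_sub_single_notMem {I : Ideal (MvPolynomial (Fin n) K)}
    {m : Fin n →₀ ℕ} (hm : monomial m (1 : K) ∈ I)
    (h : ∀ i, 0 < m i → monomial (m - Finsupp.single i 1) (1 : K) ∉ I) : MinGen I m := by
  refine ⟨hm, fun m' hle hne hm' => ?_⟩
  obtain ⟨i, hi⟩ : ∃ i, m' i < m i := by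
    by_contra! h
    exact hne (le_antisymm hle h)
  refine h i (by omega) (monomial_mem_of_le (fun j => ?_) hm')
  by_cases hj : j = i
  · subst hj
    rw [Finsupp.tsub_apply, Finsupp.single_eq_same]
    omega
  · simpa [Finsupp.single_apply, Ne.symm hj] using hle j

theorem aeval_indicator_monomial (J : Finset (Fin n)) (m : Fin n →₀ ℕ) :
    aeval (fun i => if i ∈ J then Polynomial.X else 1) (monomial m (1 : K)) =
      (Polynomial.X : Polynomial K) ^ ∑ i ∈ J, m i := by
  rw [aeval_monomial, map_one, one_mul, Finsupp.prod_fintype _ _ (fun _ => by simp)]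
  simp [ite_pow, Finset.prod_ite_mem, Finset.prod_pow_eq_pow_sum]

theorem sum_le_of_monomial_mem_mIdeal_pow {J : Finset (Fin n)} {k : ℕ} {m : Fin n →₀ ℕ}
    (h : monomial m (1 : K) ∈ mIdeal K (J : Set (Fin n)) ^ k) : k ≤ ∑ i ∈ J, m i := by
  set φ : MvPolynomial (Fin n) K →ₐ[K] Polynomial K :=
    aeval fun i => if i ∈ J then Polynomial.X else 1
  have hmap : (mIdeal K (J : Set (Fin n))).map φ ≤ Ideal.span {Polynomial.X} := by
    rw [mIdeal, Ideal.map_span, Ideal.span_le]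
    rintro _ ⟨_, ⟨i, hi, rfl⟩, rfl⟩
    simp [φ, Finset.mem_coe.mp hi]
  have hX : φ (monomial m 1) ∈ Ideal.span {Polynomial.X ^ k} := by
    rw [← Ideal.span_singleton_pow]
    exact Ideal.pow_right_mono hmap k (Ideal.map_pow φ _ k ▸ Ideal.mem_map_of_mem φ h)
  rwa [aeval_indicator_monomial, Ideal.mem_span_singleton,
    pow_dvd_pow_iff Polynomial.X_ne_zero Polynomial.not_isUnit_X] at hX

theorem monomial_mem_mIdeal_pow_of_le_sum {J : Finset (Fin n)} {k : ℕ} {m : Fin n →₀ ℕ}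
    (h : k ≤ ∑ i ∈ J, m i) : monomial m (1 : K) ∈ mIdeal K (J : Set (Fin n)) ^ k := by
  induction k generalizing m with
  | zero => simp
  | succ k ih =>
    obtain ⟨i, hiJ, hi⟩ : ∃ i ∈ J, 0 < m i := by
      by_contra! h0
      have : ∑ i ∈ J, m i = 0 := Finset.sum_eq_zero fun i hi => by have := h0 i hi; omega
      omega
    have hsplit : m = Finsupp.single i 1 + (m - Finsupp.single i 1) := by
      ext j
      by_cases hj : j = i
      · subst hj
        rw [Finsupp.add_apply, Finsupp.tsub_apply, Finsupp.single_eq_same]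
        omega
      · simp [Ne.symm hj]
    have hsum : ∑ j ∈ J, m j = 1 + ∑ j ∈ J, (m - Finsupp.single i 1 : Fin n →₀ ℕ) j := by
      conv_lhs => rw [hsplit]
      simp [Finset.sum_add_distrib, Finsupp.single_apply, hiJ]
    have hrest : k ≤ ∑ j ∈ J, (m - Finsupp.single i 1 : Fin n →₀ ℕ) j := by omega
    rw [hsplit, ← mul_one (1 : K), ← monomial_mul, pow_succ']
    exact Ideal.mul_mem_mul (Ideal.subset_span ⟨i, hiJ, rfl⟩) (ih hrest)

theorem monomial_mem_mIdeal_pow_iff (J : Finset (Fin n)) (k : ℕ) (m : Fin n →₀ ℕ) :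
    monomial m (1 : K) ∈ mIdeal K (J : Set (Fin n)) ^ k ↔ k ≤ ∑ i ∈ J, m i :=
  ⟨sum_le_of_monomial_mem_mIdeal_pow, monomial_mem_mIdeal_pow_of_le_sum⟩

theorem expDeg_eq_degree (m : Fin n →₀ ℕ) : expDeg m = m.degree := rfl

namespace NPDECounterexample

noncomputable def I (K : Type*) [Field K] : Ideal (MvPolynomial (Fin 6) K) :=
  (mIdeal K {0, 1}) ^ 2 ⊓ (mIdeal K {1, 2}) ^ 2 ⊓ (mIdeal K {2, 3, 4}) ^ 2 ⊓
    (mIdeal K {4, 5}) ^ 2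

noncomputable def u : Fin 6 →₀ ℕ :=
  Finsupp.single 0 1 + Finsupp.single 1 1 + Finsupp.single 2 1 + Finsupp.single 4 2

noncomputable def v : Fin 6 →₀ ℕ := Finsupp.single 1 2 + Finsupp.single 3 2 + Finsupp.single 5 2

theorem monomial_mem_I_iff (m : Fin 6 →₀ ℕ) :
    monomial m (1 : K) ∈ I K ↔
      2 ≤ m 0 + m 1 ∧ 2 ≤ m 1 + m 2 ∧ 2 ≤ m 2 + m 3 + m 4 ∧ 2 ≤ m 4 + m 5 := by
  simp only [I, Ideal.mem_inf, ← Finset.coe_pair, ← Finset.coe_insert,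
    monomial_mem_mIdeal_pow_iff]
  simp [add_assoc, and_assoc]

theorem minGen_u : MinGen (I K) u := by
  refine minGen_of_forall_sub_single_notMem ((monomial_mem_I_iff u).mpr ?_) fun i hi => ?_
  · simp [u]
  · rw [monomial_mem_I_iff]
    fin_cases i <;> simp [u] at hi ⊢

theorem minGen_v : MinGen (I K) v := by
  refine minGen_of_forall_sub_single_notMem ((monomial_mem_I_iff v).mpr ?_) fun i hi => ?_
  · simp [v]
  · rw [monomial_mem_I_iff]
    fin_cases i <;> simp [v] at hi ⊢

theorem expDeg_u_lt_expDeg_v : expDeg u < expDeg v := by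
  simp [expDeg_eq_degree, u, v]

theorem exchange_notMem {j : Fin 6} (hj : u j < v j) :
    monomial (v + Finsupp.single 0 1 - Finsupp.single j 1) (1 : K) ∉ I K := by
  rw [monomial_mem_I_iff]
  fin_cases j <;> simp [u, v] at hj ⊢

theorem not_npde : ¬ NPDE (I K) := fun h => by
  obtain ⟨j, hj, hmem⟩ := h u v minGen_u minGen_v expDeg_u_lt_expDeg_v.le 0 (by simp [u, v])
  exact exchange_notMem hj hmem

theorem X_exchange_monomials_notMem :
    (X 0 * X 1 * X 3 ^ 2 * X 5 ^ 2 : MvPolynomial (Fin 6) K) ∉ I K ∧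
    (X 0 * X 1 ^ 2 * X 3 * X 5 ^ 2 : MvPolynomial (Fin 6) K) ∉ I K ∧
    (X 0 * X 1 ^ 2 * X 3 ^ 2 * X 5 : MvPolynomial (Fin 6) K) ∉ I K := by
  simp only [X, monomial_pow, monomial_mul, one_pow, one_mul, monomial_mem_I_iff]
  simp

end NPDECounterexample

end

theorem stmt11 (K : Type*) [Field K] :
    let I : Ideal (MvPolynomial (Fin 6) K) :=
      (mIdeal K {0, 1}) ^ 2 ⊓ (mIdeal K {1, 2}) ^ 2 ⊓ (mIdeal K {2, 3, 4}) ^ 2 ⊓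
        (mIdeal K {4, 5}) ^ 2
    let u : Fin 6 →₀ ℕ :=
      Finsupp.single 0 1 + Finsupp.single 1 1 + Finsupp.single 2 1 + Finsupp.single 4 2
    let v : Fin 6 →₀ ℕ := Finsupp.single 1 2 + Finsupp.single 3 2 + Finsupp.single 5 2
    ¬ NPDE I ∧ MinGen I u ∧ MinGen I v ∧ expDeg u < expDeg v ∧ v 0 < u 0 ∧
    (X 0 * X 1 * X 3 ^ 2 * X 5 ^ 2 : MvPolynomial (Fin 6) K) ∉ I ∧
    (X 0 * X 1 ^ 2 * X 3 * X 5 ^ 2 : MvPolynomial (Fin 6) K) ∉ I ∧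
    (X 0 * X 1 ^ 2 * X 3 ^ 2 * X 5 : MvPolynomial (Fin 6) K) ∉ I :=
  ⟨NPDECounterexample.not_npde, NPDECounterexample.minGen_u, NPDECounterexample.minGen_v,
    NPDECounterexample.expDeg_u_lt_expDeg_v, by simp,
    NPDECounterexample.X_exchange_monomials_notMem⟩
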